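/- The bases of the parametric matroid M_X are exactly the sets of the form I ∪ R̲(X) where for every equivalence class P of R with P ⊄ R̲(X), |P ∩ I| = |P| − 1. -/

import Mathlib

open Finset

variable {α : Type*} [Fintype α] [DecidableEq α]

/-- The lower approximation of `S` w.r.t. the equivalence relation `R`:
`{x : [x]_R ⊆ S}`. -/
def lowerApprox (R : Setoid α) [DecidableRel R.r] (S : Finset α) : Finset α :=
  Finset.univ.filter fun x => ∀ y, R.r x y → y ∈ S


/-- The equivalence class of `x` w.r.t. `R`, as a finset. -/
def cls (R : Setoid α) [DecidableRel R.r] (x : α) : Finset α :=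
  Finset.univ.filter fun y => R.r x y

/-! A set `B` is independent iff no class outside `R̲(X)` lies entirely inside `B`. Adding a
point `y ∉ B` preserves this unless it completes the class of `y`, so `B` is maximal iff it
contains `R̲(X)` and misses exactly one point of every other class; one may then take `I = B`. -/
lemma Finset.card_inter_eq_card_sub_one_iff {β : Type*} [DecidableEq β] {s t : Finset β}
    (hs : s.Nonempty) : #(s ∩ t) = #s - 1 ↔ #(s \ t) = 1 := by
  have := card_sdiff_add_card_inter s t
  have := hs.card_pos
  omega

section
variable {α : Type*} [Fintype α] (R : Setoid α) [DecidableRel R.r] {x y : α}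

lemma mem_cls : y ∈ cls R x ↔ R.r x y := by simp [cls]

lemma mem_cls_self (x : α) : x ∈ cls R x := (mem_cls R).2 (R.refl x)

lemma cls_nonempty (x : α) : (cls R x).Nonempty := ⟨x, mem_cls_self R x⟩

lemma cls_eq_of_mem (h : y ∈ cls R x) : cls R y = cls R x := by
  ext z
  simp only [mem_cls]
  exact ⟨R.trans ((mem_cls R).1 h), R.trans (R.symm ((mem_cls R).1 h))⟩

end

section
variable (R : Setoid α) [DecidableRel R.r] {S T : Finset α} {x y : α}

lemma cls_subset_iff_mem_lowerApprox : cls R x ⊆ S ↔ x ∈ lowerApprox R S := by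
  simp [Finset.subset_iff, mem_cls, lowerApprox]

lemma lowerApprox_subset (S : Finset α) : lowerApprox R S ⊆ S :=
  fun x hx => (cls_subset_iff_mem_lowerApprox R).2 hx (mem_cls_self R x)

lemma lowerApprox_mono (h : S ⊆ T) : lowerApprox R S ⊆ lowerApprox R T := fun _ hx =>
  (cls_subset_iff_mem_lowerApprox R).1 (((cls_subset_iff_mem_lowerApprox R).2 hx).trans h)

lemma cls_subset_lowerApprox_iff : cls R x ⊆ lowerApprox R S ↔ x ∈ lowerApprox R S := by
  refine ⟨fun h => h (mem_cls_self R x), fun hx y hy => ?_⟩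
  rw [← cls_subset_iff_mem_lowerApprox, cls_eq_of_mem R hy]
  exact (cls_subset_iff_mem_lowerApprox R).2 hx

lemma mem_lowerApprox_of_mem_cls (hy : y ∈ cls R x) (hyS : y ∈ lowerApprox R S) :
    x ∈ lowerApprox R S :=
  (cls_subset_lowerApprox_iff R).2 hyS (cls_eq_of_mem R hy ▸ mem_cls_self R x)

lemma disjoint_cls_lowerApprox (hx : x ∉ lowerApprox R S) :
    Disjoint (cls R x) (lowerApprox R S) :=
  Finset.disjoint_left.2 fun _ hy hyS => hx (mem_lowerApprox_of_mem_cls R hy hyS)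

lemma lowerApprox_subset_iff :
    lowerApprox R S ⊆ T ↔ ∀ x ∉ lowerApprox R T, ¬ cls R x ⊆ S := by
  simp only [cls_subset_iff_mem_lowerApprox]
  refine ⟨fun h x hxT hxS => hxT ?_, fun h x hxS => ?_⟩
  · exact (cls_subset_iff_mem_lowerApprox R).1
      (((cls_subset_lowerApprox_iff R).2 hxS).trans h)
  · by_contra hxT
    exact h x (fun hx => hxT (lowerApprox_subset R T hx)) hxS

lemma lowerApprox_insert_subset_iff (hS : lowerApprox R S ⊆ T) :
    lowerApprox R (insert y S) ⊆ T ↔ y ∈ lowerApprox R T ∨ ¬ cls R y ⊆ insert y S := by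
  rw [lowerApprox_subset_iff] at hS ⊢
  refine ⟨fun h => or_iff_not_imp_left.2 (h y), fun h x hx hxS => ?_⟩
  by_cases hyx : y ∈ cls R x
  · rw [← cls_eq_of_mem R hyx] at hxS
    exact h.elim (fun hy => hx (mem_lowerApprox_of_mem_cls R hyx hy)) (· hxS)
  · exact hS x hx ((subset_insert_iff_of_notMem hyx).1 hxS)

lemma maximal_lowerApprox_subset_iff {B X : Finset α} :
    Maximal (fun I => lowerApprox R I ⊆ X) B ↔
      lowerApprox R X ⊆ B ∧ ∀ x ∉ lowerApprox R X, #(cls R x \ B) = 1 := by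
  rw [maximal_iff_forall_insert fun _ _ hJ hIJ => (lowerApprox_mono R hIJ).trans hJ]
  constructor
  · rintro ⟨hB, hmax⟩
    simp only [lowerApprox_insert_subset_iff R hB, not_or, not_not] at hmax
    refine ⟨fun y hy => by_contra fun hyB => (hmax y hyB).1 hy, fun x hx => ?_⟩
    obtain ⟨y, hyx, hyB⟩ := not_subset.1 ((lowerApprox_subset_iff R).1 hB x hx)
    have hcls := (hmax y hyB).2
    rw [cls_eq_of_mem R hyx] at hcls
    refine card_eq_one.2 ⟨y, eq_singleton_iff_unique_mem.2 ⟨mem_sdiff.2 ⟨hyx, hyB⟩, ?_⟩⟩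
    intro z hz
    rw [mem_sdiff] at hz
    exact (mem_insert.1 (hcls hz.1)).resolve_right hz.2
  · rintro ⟨hLB, hcard⟩
    have hB : lowerApprox R B ⊆ X := (lowerApprox_subset_iff R).2 fun x hx hxB => by
      simpa [sdiff_eq_empty_iff_subset.2 hxB] using hcard x hx
    refine ⟨hB, fun y hyB => ?_⟩
    rw [lowerApprox_insert_subset_iff R hB, not_or, not_not]
    have hyL : y ∉ lowerApprox R X := fun hy => hyB (hLB hy)
    have hsingle : cls R y \ B = {y} := by
      obtain ⟨z, hz⟩ := card_eq_one.1 (hcard y hyL)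
      have hyz : y ∈ ({z} : Finset α) := hz ▸ mem_sdiff.2 ⟨mem_cls_self R y, hyB⟩
      rw [hz, mem_singleton.1 hyz]
    refine ⟨hyL, fun w hw => mem_insert.2 (or_iff_not_imp_right.2 fun hwB => ?_)⟩
    exact mem_singleton.1 (hsingle ▸ mem_sdiff.2 ⟨hw, hwB⟩)

end

theorem bases_of_parametric_matroid (R : Setoid α) [DecidableRel R.r] (X : Finset α) :
    ∀ B : Finset α,
      (lowerApprox R B ⊆ X ∧ ∀ I : Finset α, lowerApprox R I ⊆ X → B ⊆ I → B = I) ↔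
      ∃ I : Finset α, B = I ∪ lowerApprox R X ∧
        ∀ x : α, ¬ cls R x ⊆ lowerApprox R X → (cls R x ∩ I).card = (cls R x).card - 1 := by
  intro B
  rw [← maximal_iff (P := fun I => lowerApprox R I ⊆ X), maximal_lowerApprox_subset_iff]
  simp only [cls_subset_lowerApprox_iff, card_inter_eq_card_sub_one_iff (cls_nonempty R _)]
  constructor
  · rintro ⟨hLB, hcard⟩
    exact ⟨B, (union_eq_left.2 hLB).symm, hcard⟩
  · rintro ⟨I, rfl, hcard⟩
    refine ⟨subset_union_right, fun x hx => ?_⟩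
    rw [sdiff_union_distrib, (disjoint_cls_lowerApprox R hx).sdiff_eq_left,
      inter_eq_left.2 sdiff_subset]
    exact hcard x hx
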